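/- (Operational signature of affine independence) Let σ₁,...,σ_K be density matrices and p a strictly positive probability distribution. If there exists a POVM {Fₖ} with guessing probability Σₖ pₖ Tr(Fₖ σₖ) > 1 − p_min/2 (where p_min = minₖ pₖ), then σ₁,...,σ_K are affinely independent. -/

import Mathlib

open Matrix
open scoped ComplexOrder

/-!
Let `T j k = Re Tr(F_j σ_k)` be the probability of outcome `j` on the state `σ_k`; `T` is column
stochastic. If some diagonal entry `T b b` were at most `1/2`, the guessing probability
`∑ p_k T k k` would be at most `1 - p_b/2 ≤ 1 - p_min/2`. Hence every column of `T` is strictly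
diagonally dominant, so `T` is nonsingular (Gershgorin). A linear relation `∑ w_k σ_k = 0` gives
`T w = 0` after pairing with each `F_j`, so the `σ_k` are even linearly independent.
-/

namespace Matrix

open scoped MatrixOrder in
theorem PosSemidef.trace_mul_nonneg {𝕜 m : Type*} [RCLike 𝕜] [Fintype m] [DecidableEq m]
    {A B : Matrix m m 𝕜} (hA : A.PosSemidef) (hB : B.PosSemidef) : 0 ≤ (A * B).trace := by
  obtain ⟨S, rfl⟩ := CStarAlgebra.nonneg_iff_eq_star_mul_self.mp hA.nonneg
  rw [star_eq_conjTranspose, mul_assoc, trace_mul_comm Sᴴ]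
  exact (hB.mul_mul_conjTranspose_same S).trace_nonneg

theorem det_ne_zero_of_mem_colStochastic {ι : Type*} [Fintype ι] [DecidableEq ι]
    {M : Matrix ι ι ℝ} (hM : M ∈ colStochastic ℝ ι) (hdiag : ∀ j, 1 / 2 < M j j) :
    M.det ≠ 0 := by
  refine det_ne_zero_of_sum_col_lt_diag fun j => ?_
  simp only [Real.norm_of_nonneg (nonneg_of_mem_colStochastic hM)]
  rw [Finset.sum_erase_eq_sub (Finset.mem_univ j), sum_col_of_mem_colStochastic hM]
  linarith [hdiag j]

end Matrix

theorem linearIndependent_of_det_ne_zero {ι R M : Type*} [Fintype ι] [DecidableEq ι]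
    [CommRing R] [IsDomain R] [AddCommGroup M] [Module R M] (v : ι → M) (f : ι → M →ₗ[R] R)
    (h : (of fun i j => f i (v j)).det ≠ 0) : LinearIndependent R v :=
  LinearIndependent.of_comp (LinearMap.pi f) (linearIndependent_cols_of_det_ne_zero h)

theorem Finset.sum_mul_le_one_sub_half {ι : Type*} [Fintype ι] {p x : ι → ℝ}
    (hp : ∀ i, 0 ≤ p i) (hps : ∑ i, p i = 1) (hx : ∀ i, x i ≤ 1) {b : ι} (hb : x b ≤ 1 / 2) :
    ∑ i, p i * x i ≤ 1 - p b / 2 := by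
  have hdefect : p b * (1 - x b) ≤ ∑ i, p i * (1 - x i) :=
    single_le_sum (f := fun i => p i * (1 - x i))
      (fun i _ => mul_nonneg (hp i) (sub_nonneg.mpr (hx i))) (mem_univ b)
  have hsum : ∑ i, p i * (1 - x i) = 1 - ∑ i, p i * x i := by
    simp only [mul_sub, mul_one, sum_sub_distrib, hps]
  nlinarith [hp b]

section Measurement

variable {ι m : Type*} [Fintype m] [DecidableEq m]

noncomputable def reTraceMulLeft (A : Matrix m m ℂ) : Matrix m m ℂ →ₗ[ℝ] ℝ :=
  Complex.reLm ∘ₗ (traceLinearMap m ℝ ℂ) ∘ₗ LinearMap.mulLeft ℝ A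

noncomputable def detectionMatrix (F σ : ι → Matrix m m ℂ) : Matrix ι ι ℝ :=
  of fun j k => reTraceMulLeft (F j) (σ k)

theorem detectionMatrix_apply (F σ : ι → Matrix m m ℂ) (j k : ι) :
    detectionMatrix F σ j k = ((F j * σ k).trace).re :=
  rfl

theorem detectionMatrix_mem_colStochastic [Fintype ι] [DecidableEq ι] {F σ : ι → Matrix m m ℂ}
    (hF : ∀ j, (F j).PosSemidef) (hFsum : ∑ j, F j = 1)
    (hσ : ∀ k, (σ k).PosSemidef) (hσt : ∀ k, (σ k).trace = 1) :
    detectionMatrix F σ ∈ colStochastic ℝ ι := by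
  refine mem_colStochastic_iff_sum.mpr ⟨fun j k => ?_, fun k => ?_⟩
  · exact (Complex.nonneg_iff.mp ((hF j).trace_mul_nonneg (hσ k))).1
  · simp only [detectionMatrix_apply, ← Complex.re_sum, ← trace_sum, ← Finset.sum_mul, hFsum,
      one_mul, hσt k, Complex.one_re]

end Measurement

/-- Operational signature of affine independence: if some POVM achieves guessing
probability exceeding `1 − (min p)/2`, the states `σ k` are affinely independent. -/
theorem affineIndependent_of_high_guess {n K : ℕ} (hK : 0 < K)
    (σ : Fin K → Matrix (Fin n) (Fin n) ℂ)
    (hσ : ∀ k, (σ k).PosSemidef) (hσt : ∀ k, (σ k).trace = 1)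
    (p : Fin K → ℝ) (hp : ∀ k, 0 < p k) (hps : ∑ k, p k = 1)
    (F : Fin K → Matrix (Fin n) (Fin n) ℂ)
    (hF : ∀ k, (F k).PosSemidef) (hFsum : ∑ k, F k = 1)
    (hguess : 1 - (Finset.univ.inf' (Finset.univ_nonempty_iff.mpr ⟨⟨0, hK⟩⟩) p) / 2 <
      ∑ k, p k * ((F k * σ k).trace).re) :
    AffineIndependent ℝ σ := by
  have hT := detectionMatrix_mem_colStochastic hF hFsum hσ hσt
  have hdiag : ∀ k, 1 / 2 < detectionMatrix F σ k k := by
    by_contra! ⟨b, hb⟩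
    have hguess_le := Finset.sum_mul_le_one_sub_half (x := fun k => detectionMatrix F σ k k) (fun k => (hp k).le) hps
      (fun k => le_one_of_mem_colStochastic hT) hb
    have hmin := Finset.inf'_le p (Finset.mem_univ b)
    simp only [detectionMatrix_apply] at hguess_le
    linarith
  exact (linearIndependent_of_det_ne_zero σ (fun j => reTraceMulLeft (F j))
    (det_ne_zero_of_mem_colStochastic hT hdiag)).affineIndependent
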